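/- arXiv:1108.6001 — 3 statements merged into one kernel-verified Lean document; each statement's English description precedes it below -/
import Mathlib

section
/- Fix n, and natural numbers a, b with a ≥ 1 and m := n − a − b ≥ 1. The number of sequences S of length n over {0,1,*} with exactly a zeros, b ones and m stars, such that no 1 occurs to the right of the rightmost * and at least one 0 occurs to the left of the leftmost *, equals Σ_{c=0}^{b} C(n−1−c, a−1)·C(m−1+b−c, m−1). -/
/-!
A word counted here is `1^c 0 w`, where `w` has `a - 1` zeros, `b - c` ones and `m` stars and
only has to satisfy "every one has a star to its right": the leading zero already precedes every
star. Peeling off the first letter shows that words with `a` zeros, `b` ones and `m` stars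
subject to that condition number `C(n, a) * C(b + m - 1, b)` (the zeros are free, and the last
of the remaining letters must be a star), and summing over `c` gives the formula.
-/

open Finset

variable {α : Type*} {n : ℕ}

theorem card_filter_fin_succ [Fintype α] (P : (Fin (n + 1) → α) → Prop) [DecidablePred P] :
    #{S | P S} = ∑ x, #{S : Fin n → α | P (Fin.cons x S)} := by
  simp only [card_filter]
  rw [← Fintype.sum_prod_type']
  exact (Fintype.sum_equiv (Fin.consEquiv fun _ => α) _ _ fun _ => rfl).symm

theorem card_filter_const_and_eq_ite {β : Type*} {s : Finset β} {p : Prop} [Decidable p]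
    {q : β → Prop} [DecidablePred q] {k : ℕ} (h : p → #{x ∈ s | q x} = k) :
    #{x ∈ s | p ∧ q x} = if p then k else 0 := by
  split_ifs with hp
  · simpa only [hp, true_and] using h hp
  · simp only [hp, false_and, filter_false, card_empty]

def EveryFollowedBy (u v : α) (S : Fin n → α) : Prop :=
  ∀ q, S q = u → ∃ r, q < r ∧ S r = v

def OccursBeforeAny (u v : α) (S : Fin n → α) : Prop :=
  ∃ p, S p = u ∧ ∀ r, r ≤ p → S r ≠ v

theorem everyFollowedBy_cons {u v x : α} {S : Fin n → α} :
    EveryFollowedBy u v (Fin.cons x S : Fin (n + 1) → α) ↔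
      (x = u → ∃ r, S r = v) ∧ EveryFollowedBy u v S := by
  simp only [EveryFollowedBy, Fin.forall_fin_succ, Fin.exists_fin_succ, Fin.cons_zero,
    Fin.cons_succ, Fin.succ_lt_succ_iff, Fin.succ_pos, Fin.not_lt_zero, false_and, false_or,
    true_and]

theorem occursBeforeAny_cons {u v x : α} {S : Fin n → α} :
    OccursBeforeAny u v (Fin.cons x S : Fin (n + 1) → α) ↔
      x ≠ v ∧ (x = u ∨ OccursBeforeAny u v S) := by
  simp only [OccursBeforeAny, Fin.forall_fin_succ, Fin.exists_fin_succ, Fin.cons_zero,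
    Fin.cons_succ, Fin.succ_le_succ_iff, Fin.zero_le, Fin.le_zero_iff, Fin.succ_ne_zero,
    true_implies, false_implies]
  grind

section Letters

variable [DecidableEq α]

instance (u v : α) : DecidablePred (EveryFollowedBy u v : (Fin n → α) → Prop) :=
  fun _ => by unfold EveryFollowedBy; infer_instance

instance (u v : α) : DecidablePred (OccursBeforeAny u v : (Fin n → α) → Prop) :=
  fun _ => by unfold OccursBeforeAny; infer_instance

def letterCount (S : Fin n → α) (v : α) : ℕ := #{i | S i = v}

theorem letterCount_cons (x : α) (S : Fin n → α) (v : α) :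
    letterCount (Fin.cons x S : Fin (n + 1) → α) v = letterCount S v + if x = v then 1 else 0 := by
  simp only [letterCount, card_filter, Fin.sum_univ_succ, Fin.cons_zero, Fin.cons_succ]
  ring

theorem letterCount_pos_iff {S : Fin n → α} {v : α} : 0 < letterCount S v ↔ ∃ r, S r = v := by
  simp [letterCount, card_pos, filter_nonempty_iff]

end Letters

def HasCounts (a b m : ℕ) (S : Fin n → Fin 3) : Prop :=
  letterCount S 0 = a ∧ letterCount S 1 = b ∧ letterCount S 2 = m

instance (a b m : ℕ) : DecidablePred (HasCounts a b m : (Fin n → Fin 3) → Prop) :=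
  fun _ => by unfold HasCounts; infer_instance

section HasCounts

variable {a b m : ℕ} {S : Fin n → Fin 3}

theorem HasCounts.exists_eq_two_iff (h : HasCounts a b m S) : (∃ r, S r = 2) ↔ 0 < m := by
  rw [← letterCount_pos_iff, h.2.2]

theorem hasCounts_cons_zero :
    HasCounts a b m (Fin.cons 0 S : Fin (n + 1) → Fin 3) ↔ 0 < a ∧ HasCounts (a - 1) b m S := by
  simp only [HasCounts, letterCount_cons, Fin.isValue, Fin.reduceEq, ↓reduceIte, add_zero]
  omega

theorem hasCounts_cons_one :
    HasCounts a b m (Fin.cons 1 S : Fin (n + 1) → Fin 3) ↔ 0 < b ∧ HasCounts a (b - 1) m S := by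
  simp only [HasCounts, letterCount_cons, Fin.isValue, Fin.reduceEq, ↓reduceIte, add_zero]
  omega

theorem hasCounts_cons_two :
    HasCounts a b m (Fin.cons 2 S : Fin (n + 1) → Fin 3) ↔ 0 < m ∧ HasCounts a b (m - 1) S := by
  simp only [HasCounts, letterCount_cons, Fin.isValue, Fin.reduceEq, ↓reduceIte, add_zero]
  omega

end HasCounts

theorem succ_choose_mul_choose {a b m : ℕ} (h : a + b + m = n + 1) :
    (n + 1).choose a * (b + m - 1).choose b =
      ((if 0 < a then n.choose (a - 1) * (b + m - 1).choose b else 0) +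
        if 0 < b ∧ 0 < m then n.choose a * (b - 1 + m - 1).choose (b - 1) else 0) +
        if 0 < m then n.choose a * (b + (m - 1) - 1).choose b else 0 := by
  have pascal (j k : ℕ) :
      (j + 1 + k).choose (j + 1) = (j + k).choose j + (j + k).choose (j + 1) := by
    rw [add_right_comm, Nat.choose_succ_succ]
  rcases a with _ | a <;> rcases b with _ | b <;> rcases m with _ | m <;>
    simp [Nat.choose_succ_succ] at h ⊢
  · exact pascal b m
  · exact Nat.choose_eq_zero_of_lt (by omega)
  · rw [pascal b m]; ring

/- At `m = 0` truncated subtraction turns `(b + m - 1).choose b` into `(b - 1).choose b`,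
which is `1` for `b = 0` and `0` otherwise, as it should be. -/
theorem card_hasCounts_everyFollowedBy {a b m : ℕ} (h : a + b + m = n) :
    #{S : Fin n → Fin 3 | HasCounts a b m S ∧ EveryFollowedBy 1 2 S} =
      n.choose a * (b + m - 1).choose b := by
  induction n generalizing a b m with
  | zero =>
    obtain ⟨rfl, rfl, rfl⟩ : a = 0 ∧ b = 0 ∧ m = 0 := by omega
    decide
  | succ n ih =>
    rw [card_filter_fin_succ, Fin.sum_univ_three, succ_choose_mul_choose h]
    simp only [hasCounts_cons_zero, hasCounts_cons_one, hasCounts_cons_two, everyFollowedBy_cons,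
      Fin.isValue, Fin.reduceEq, false_implies, true_implies, true_and, and_assoc]
    have first_one (S : Fin n → Fin 3) :
        (0 < b ∧ HasCounts a (b - 1) m S ∧ (∃ r, S r = 2) ∧ EveryFollowedBy 1 2 S) ↔
          (0 < b ∧ 0 < m) ∧ HasCounts a (b - 1) m S ∧ EveryFollowedBy 1 2 S := by
      constructor
      · rintro ⟨hb, hS, hstar, hfollow⟩
        exact ⟨⟨hb, hS.exists_eq_two_iff.1 hstar⟩, hS, hfollow⟩
      · rintro ⟨⟨hb, hm⟩, hS, hfollow⟩
        exact ⟨hb, hS, hS.exists_eq_two_iff.2 hm, hfollow⟩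
    rw [filter_congr fun S _ => first_one S]
    congr 2 <;> exact card_filter_const_and_eq_ite fun _ => ih (by omega)

theorem card_hasCounts_everyFollowedBy_occursBeforeAny_succ {a b m : ℕ} (ha : 0 < a)
    (hm : 0 < m) :
    #{S : Fin (n + 1) → Fin 3 |
        HasCounts a b m S ∧ EveryFollowedBy 1 2 S ∧ OccursBeforeAny 0 2 S} =
      #{S : Fin n → Fin 3 | HasCounts (a - 1) b m S ∧ EveryFollowedBy 1 2 S} +
        if 0 < b then
          #{S : Fin n → Fin 3 |
            HasCounts a (b - 1) m S ∧ EveryFollowedBy 1 2 S ∧ OccursBeforeAny 0 2 S}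
        else 0 := by
  rw [card_filter_fin_succ, Fin.sum_univ_three]
  simp only [hasCounts_cons_zero, hasCounts_cons_one, hasCounts_cons_two, everyFollowedBy_cons,
    occursBeforeAny_cons, Fin.isValue, Fin.reduceEq, false_implies, true_implies, true_and,
    and_assoc, ne_eq, not_true_eq_false, not_false_eq_true, true_or, false_or, false_and,
    and_false, and_true, filter_false, card_empty, add_zero, ha]
  have first_one (S : Fin n → Fin 3) :
      (HasCounts a (b - 1) m S ∧ (∃ r, S r = 2) ∧
        EveryFollowedBy 1 2 S ∧ OccursBeforeAny 0 2 S) ↔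
        HasCounts a (b - 1) m S ∧ EveryFollowedBy 1 2 S ∧ OccursBeforeAny 0 2 S :=
    and_congr_right fun hS => by rw [hS.exists_eq_two_iff, eq_true hm, true_and]
  simp only [first_one]
  exact congrArg _ (card_filter_const_and_eq_ite fun _ => rfl)

theorem card_hasCounts_everyFollowedBy_occursBeforeAny {a b m : ℕ} (ha : 0 < a) (hm : 0 < m)
    (h : a + b + m = n) :
    #{S : Fin n → Fin 3 | HasCounts a b m S ∧ EveryFollowedBy 1 2 S ∧ OccursBeforeAny 0 2 S} =
      ∑ c ∈ range (b + 1), (n - 1 - c).choose (a - 1) * (m - 1 + b - c).choose (m - 1) := by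
  induction b generalizing n with
  | zero =>
    obtain ⟨n, rfl⟩ := Nat.exists_eq_add_one_of_ne_zero (by omega : n ≠ 0)
    rw [card_hasCounts_everyFollowedBy_occursBeforeAny_succ ha hm,
      card_hasCounts_everyFollowedBy (by omega)]
    simp
  | succ b ih =>
    obtain ⟨n, rfl⟩ := Nat.exists_eq_add_one_of_ne_zero (by omega : n ≠ 0)
    rw [card_hasCounts_everyFollowedBy_occursBeforeAny_succ ha hm,
      card_hasCounts_everyFollowedBy (by omega), if_pos b.succ_pos, Nat.add_sub_cancel,
      ih (by omega), sum_range_succ' _ (b + 1), add_comm]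
    congr 1
    · refine sum_congr rfl fun c _ => ?_
      congr 2 <;> omega
    · rw [show b + 1 + m - 1 = m - 1 + (b + 1) by omega, ← Nat.choose_symm_add]
      simp

/-- Sequences over {0,1,*} are encoded as functions `Fin n → Fin 3`,
with `0` = zero, `1` = one, `2` = star. -/
theorem stmt3 (n a b : ℕ) (ha : 1 ≤ a) (hm : 1 ≤ n - a - b) :
    ((Finset.univ : Finset (Fin n → Fin 3)).filter (fun S =>
        (Finset.univ.filter fun i => S i = 0).card = a ∧
        (Finset.univ.filter fun i => S i = 1).card = b ∧
        (Finset.univ.filter fun i => S i = 2).card = n - a - b ∧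
        (∀ q, S q = 1 → ∃ r, q < r ∧ S r = 2) ∧
        (∃ p, S p = 0 ∧ ∀ r, r ≤ p → S r ≠ 2))).card
      = ∑ c ∈ Finset.range (b + 1),
          (n - 1 - c).choose (a - 1) * (n - a - b - 1 + b - c).choose (n - a - b - 1) := by
  rw [← card_hasCounts_everyFollowedBy_occursBeforeAny ha hm (by omega)]
  simp only [HasCounts, and_assoc]
  rfl
end

section
/- Fix n, and natural numbers a, b with b ≥ 1 and m := n − a − b ≥ 1. The number of sequences S of length n over {0,1,*} with exactly a zeros, b ones and m stars, such that some 1 occurs to the right of the rightmost * and no 0 occurs to the left of the leftmost *, equals Σ_{c=0}^{a} C(n−1−c, b−1)·C(m−1+a−c, m−1). -/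
/-! An admissible sequence ends in `1 0^c` with `c ≤ a`, all its stars lie before this last one,
and its first letter that is not a one is a star. Record the last one `ℓ = n - 1 - c`, the other
`b - 1` ones `T ⊆ [0, ℓ)` and the `m` stars `U ⊆ [0, ℓ) \ T`: the condition on the zeros says
exactly that `U` contains the least element of `[0, ℓ) \ T`, a set of size `m + a - c`. This gives
`C(n-1-c, b-1) · C(m-1+a-c, m-1)` sequences for each `c`. -/

open Finset

section PowersetCard

variable {α : Type*}

theorem card_filter_mem_powersetCard_succ [DecidableEq α] {s : Finset α} {x : α} (hx : x ∈ s)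
    (k : ℕ) : #{t ∈ powersetCard (k + 1) s | x ∈ t} = (#s - 1).choose k := by
  rw [← card_erase_of_mem hx, ← card_powersetCard]
  refine card_nbij' (·.erase x) (insert x) (fun t ht => ?_) (fun t ht => ?_)
    (fun t ht => insert_erase (mem_filter.1 ht).2) (fun t ht => ?_)
  all_goals simp only [mem_coe, mem_filter, mem_powersetCard] at ht ⊢
  · exact ⟨erase_subset_erase x ht.1.1, by rw [card_erase_of_mem ht.2, ht.1.2]; rfl⟩
  · have hxt : x ∉ t := fun h => notMem_erase x s (ht.1 h)
    exact ⟨⟨insert_subset hx (ht.1.trans (erase_subset x s)),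
      by rw [card_insert_of_notMem hxt, ht.2]⟩, mem_insert_self x t⟩
  · exact erase_insert fun h => notMem_erase x s (ht.1 h)

variable [LinearOrder α]

theorem forall_exists_lt_iff_min'_mem [DecidableEq α] {s t : Finset α} (hts : t ⊆ s)
    (hs : s.Nonempty) :
    (∀ r ∈ s \ t, ∃ x ∈ t, x < r) ↔ s.min' hs ∈ t := by
  constructor
  · intro h
    by_contra hmin
    obtain ⟨x, hx, hlt⟩ := h _ (mem_sdiff.2 ⟨min'_mem s hs, hmin⟩)
    exact (min'_le s x (hts hx)).not_gt hlt
  · intro hmin r hr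
    obtain ⟨hrs, hrt⟩ := mem_sdiff.1 hr
    exact ⟨_, hmin, (min'_le s r hrs).lt_of_ne (ne_of_mem_of_not_mem hmin hrt)⟩

theorem card_filter_powersetCard_forall_exists_lt [DecidableEq α] {s : Finset α}
    [DecidablePred fun t : Finset α => ∀ r ∈ s \ t, ∃ x ∈ t, x < r] (hs : s.Nonempty) (k : ℕ) :
    #{t ∈ powersetCard (k + 1) s | ∀ r ∈ s \ t, ∃ x ∈ t, x < r} = (#s - 1).choose k := by
  rw [← card_filter_mem_powersetCard_succ (min'_mem s hs) k]
  congr 1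
  exact filter_congr fun t ht => forall_exists_lt_iff_min'_mem (mem_powersetCard.1 ht).1 hs

end PowersetCard

theorem Finset.eq_and_eq_of_insert_eq_insert {α : Type*} [LinearOrder α]
    [LocallyFiniteOrderBot α] {ℓ₁ ℓ₂ : α} {T₁ T₂ : Finset α} (h₁ : T₁ ⊆ Iio ℓ₁)
    (h₂ : T₂ ⊆ Iio ℓ₂) (h : insert ℓ₁ T₁ = insert ℓ₂ T₂) : ℓ₁ = ℓ₂ ∧ T₁ = T₂ := by
  have le_of_mem {ℓ ℓ' : α} {T : Finset α} (hT : T ⊆ Iio ℓ) (hℓ' : ℓ' ∈ insert ℓ T) : ℓ' ≤ ℓ :=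
    (mem_insert.1 hℓ').elim le_of_eq fun h => (mem_Iio.1 (hT h)).le
  have hℓ : ℓ₁ = ℓ₂ :=
    (le_of_mem h₂ (h ▸ mem_insert_self ℓ₁ T₁)).antisymm (le_of_mem h₁ (h ▸ mem_insert_self ℓ₂ T₂))
  subst hℓ
  refine ⟨rfl, ?_⟩
  have := congrArg (·.erase ℓ₁) h
  simpa only [erase_insert fun h => lt_irrefl ℓ₁ (mem_Iio.1 (h₁ h)),
    erase_insert fun h => lt_irrefl ℓ₁ (mem_Iio.1 (h₂ h))] using this

theorem Fin.eq_zero_iff_ne_one_and_ne_two (x : Fin 3) : x = 0 ↔ x ≠ 1 ∧ x ≠ 2 := by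
  fin_cases x <;> decide

theorem Fin.sum_filter_sub_le_eq_sum_range {M : Type*} [AddCommMonoid M] {n a : ℕ} (ha : a < n)
    (f : ℕ → M) :
    ∑ ℓ ∈ ({ℓ | n - 1 - a ≤ (ℓ : ℕ)} : Finset (Fin n)), f ℓ =
      ∑ c ∈ range (a + 1), f (n - 1 - c) := by
  refine sum_bij' (fun ℓ _ => n - 1 - ℓ) (fun c hc => ⟨n - 1 - c, by omega⟩) ?_ ?_ ?_ ?_ ?_
  all_goals intro x hx
  all_goals simp only [mem_filter_univ, mem_range] at hx ⊢
  · omega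
  · omega
  · exact Fin.ext (Nat.sub_sub_self (by omega))
  · omega
  · congr 1
    omega

section Ternary

variable {α : Type*}

theorem card_filter_eq_zero_add_one_add_two [Fintype α] (S : α → Fin 3) :
    #{i | S i = 0} + #{i | S i = 1} + #{i | S i = 2} = Fintype.card α := by
  rw [← card_univ, card_eq_sum_card_fiberwise (s := univ) (t := univ) fun i _ => mem_univ (S i),
    Fin.sum_univ_three]

variable [DecidableEq α]

def ofOnesStars (O U : Finset α) (i : α) : Fin 3 :=
  if i ∈ O then 1 else if i ∈ U then 2 else 0

theorem filter_ofOnesStars_eq_one [Fintype α] (O U : Finset α) :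
    univ.filter (fun i => ofOnesStars O U i = 1) = O := by
  ext i
  simp only [mem_filter, mem_univ, true_and]
  unfold ofOnesStars
  split_ifs <;> simp_all

theorem filter_ofOnesStars_eq_two [Fintype α] {O U : Finset α} (h : Disjoint O U) :
    univ.filter (fun i => ofOnesStars O U i = 2) = U := by
  ext i
  simp only [mem_filter, mem_univ, true_and]
  unfold ofOnesStars
  split_ifs with hO
  · simp [disjoint_left.1 h hO]
  all_goals simp_all

theorem ofOnesStars_eq_zero_iff {O U : Finset α} {i : α} :
    ofOnesStars O U i = 0 ↔ i ∉ O ∧ i ∉ U := by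
  unfold ofOnesStars
  split_ifs <;> simp_all

theorem ofOnesStars_filter [Fintype α] (S : α → Fin 3) :
    ofOnesStars (univ.filter fun i => S i = 1) (univ.filter fun i => S i = 2) = S := by
  funext i
  unfold ofOnesStars
  simp only [mem_filter, mem_univ, true_and]
  generalize S i = x
  fin_cases x <;> rfl

end Ternary

section Admissible

variable {n a b m : ℕ}

def admissible (n a b m : ℕ) : Finset (Fin n → Fin 3) :=
  univ.filter fun S =>
    (univ.filter fun i => S i = 0).card = a ∧
    (univ.filter fun i => S i = 1).card = b ∧
    (univ.filter fun i => S i = 2).card = m ∧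
    (∃ q, S q = 1 ∧ ∀ r, q ≤ r → S r ≠ 2) ∧
    (∀ p, S p = 0 → ∃ r, r < p ∧ S r = 2)

abbrev Configuration (n : ℕ) := Σ _ : Fin n, Σ _ : Finset (Fin n), Finset (Fin n)

def Configuration.toSeq (x : Configuration n) : Fin n → Fin 3 :=
  ofOnesStars (insert x.1 x.2.1) x.2.2

def configurations (n a b m : ℕ) : Finset (Configuration n) :=
  ({ℓ | n - 1 - a ≤ (ℓ : ℕ)} : Finset (Fin n)).sigma fun ℓ =>
    (powersetCard (b - 1) (Iio ℓ)).sigma fun T =>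
      {U ∈ powersetCard m (Iio ℓ \ T) | ∀ r ∈ (Iio ℓ \ T) \ U, ∃ x ∈ U, x < r}

theorem mem_configurations {ℓ : Fin n} {T U : Finset (Fin n)} :
    ⟨ℓ, T, U⟩ ∈ configurations n a b m ↔ n - 1 - a ≤ (ℓ : ℕ) ∧ (T ⊆ Iio ℓ ∧ #T = b - 1) ∧
      (U ⊆ Iio ℓ \ T ∧ #U = m) ∧ ∀ r ∈ (Iio ℓ \ T) \ U, ∃ x ∈ U, x < r := by
  simp only [configurations, mem_sigma, mem_filter, mem_univ, true_and, mem_powersetCard]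

theorem disjoint_insert_of_subset_Iio {ℓ : Fin n} {T U : Finset (Fin n)} (hT : T ⊆ Iio ℓ)
    (hU : U ⊆ Iio ℓ \ T) : Disjoint (insert ℓ T) U := by
  refine disjoint_left.2 fun x hx hxU => ?_
  rcases mem_insert.1 hx with rfl | hxT
  · exact lt_irrefl x (mem_Iio.1 (mem_sdiff.1 (hU hxU)).1)
  · exact (mem_sdiff.1 (hU hxU)).2 hxT

theorem Configuration.toSeq_mem_admissible (hn : n = a + b + m) (hb : 1 ≤ b) (hm : 1 ≤ m)
    {x : Configuration n} (hx : x ∈ configurations n a b m) : x.toSeq ∈ admissible n a b m := by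
  obtain ⟨ℓ, T, U⟩ := x
  obtain ⟨-, ⟨hT, hTcard⟩, ⟨hU, hUcard⟩, hfirst⟩ := mem_configurations.1 hx
  show ofOnesStars (insert ℓ T) U ∈ _
  have hU_lt : ∀ x ∈ U, x < ℓ := fun x hx => mem_Iio.1 (mem_sdiff.1 (hU hx)).1
  have hones := filter_ofOnesStars_eq_one (insert ℓ T) U
  have hstars := filter_ofOnesStars_eq_two (disjoint_insert_of_subset_Iio hT hU)
  have hones_card : #(insert ℓ T) = b := by
    rw [card_insert_of_notMem fun h => lt_irrefl ℓ (mem_Iio.1 (hT h)), hTcard]; omega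
  have hzeros := card_filter_eq_zero_add_one_add_two (ofOnesStars (insert ℓ T) U)
  rw [hones, hstars, hones_card, hUcard, Fintype.card_fin] at hzeros
  refine mem_filter.2 ⟨mem_univ _, by omega, by rw [hones, hones_card], by rw [hstars, hUcard],
    ⟨ℓ, by simp [ofOnesStars], fun r hℓr hr => ?_⟩, fun p hp => ?_⟩
  · exact (hU_lt r (hstars ▸ (mem_filter_univ r).2 hr)).not_ge hℓr
  · obtain ⟨hpO, hpU⟩ := ofOnesStars_eq_zero_iff.1 hp
    have star_eq {x : Fin n} (hx : x ∈ U) : ofOnesStars (insert ℓ T) U x = 2 :=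
      (mem_filter_univ x).1 (hstars ▸ hx)
    rcases lt_or_gt_of_ne (fun h : p = ℓ => hpO (h ▸ mem_insert_self ℓ T)) with hpℓ | hℓp
    · obtain ⟨x, hxU, hxp⟩ := hfirst p <| mem_sdiff.2
        ⟨mem_sdiff.2 ⟨mem_Iio.2 hpℓ, fun h => hpO (mem_insert_of_mem h)⟩, hpU⟩
      exact ⟨x, hxp, star_eq hxU⟩
    · obtain ⟨x, hxU⟩ := card_pos.1 (hUcard ▸ hm)
      exact ⟨x, (hU_lt x hxU).trans hℓp, star_eq hxU⟩

theorem Configuration.toSeq_injOn :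
    Set.InjOn Configuration.toSeq (configurations n a b m : Set (Configuration n)) := by
  rintro ⟨ℓ₁, T₁, U₁⟩ hx₁ ⟨ℓ₂, T₂, U₂⟩ hx₂ h
  obtain ⟨-, ⟨hT₁, -⟩, ⟨hU₁, -⟩, -⟩ := mem_configurations.1 hx₁
  obtain ⟨-, ⟨hT₂, -⟩, ⟨hU₂, -⟩, -⟩ := mem_configurations.1 hx₂
  simp only [Configuration.toSeq] at h
  have hones := filter_ofOnesStars_eq_one (insert ℓ₁ T₁) U₁
  rw [h, filter_ofOnesStars_eq_one] at hones
  obtain ⟨rfl, rfl⟩ := eq_and_eq_of_insert_eq_insert hT₂ hT₁ hones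
  have hstars := filter_ofOnesStars_eq_two (disjoint_insert_of_subset_Iio hT₁ hU₁)
  rw [h, filter_ofOnesStars_eq_two (disjoint_insert_of_subset_Iio hT₂ hU₂)] at hstars
  rw [hstars]

theorem exists_mem_configurations_toSeq_eq (hb : 1 ≤ b) {S : Fin n → Fin 3}
    (hS : S ∈ admissible n a b m) : ∃ x ∈ configurations n a b m, x.toSeq = S := by
  obtain ⟨-, hzeros, hones, hstars, ⟨q, hq, hq_stars⟩, hzero_star⟩ := mem_filter.1 hS
  set O := univ.filter fun i => S i = 1
  set U := univ.filter fun i => S i = 2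
  have hO : O.Nonempty := card_pos.1 (by omega)
  set ℓ := O.max' hO
  have hℓO : ℓ ∈ O := max'_mem O hO
  have hU_lt : ∀ r ∈ U, r < ℓ := fun r hr =>
    (not_le.1 fun h => hq_stars r h ((mem_filter_univ r).1 hr)).trans_le
      (le_max' O q ((mem_filter_univ q).2 hq))
  have hzero_of_lt : ∀ r, ℓ < r → S r = 0 := fun r hr =>
    (Fin.eq_zero_iff_ne_one_and_ne_two _).2
      ⟨fun h => (le_max' O r ((mem_filter_univ r).2 h)).not_gt hr,
        fun h => (hU_lt r ((mem_filter_univ r).2 h)).asymm hr⟩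
  have hℓ : n - 1 - a ≤ (ℓ : ℕ) := by
    have := card_le_card fun r hr => (mem_filter_univ r).2 (hzero_of_lt r (mem_Ioi.1 hr))
    rw [Fin.card_Ioi, hzeros] at this
    omega
  have hT : O.erase ℓ ⊆ Iio ℓ := fun x hx => mem_Iio.2 (lt_max'_of_mem_erase_max' O hO hx)
  have hU : U ⊆ Iio ℓ \ O.erase ℓ := fun x hx => mem_sdiff.2 ⟨mem_Iio.2 (hU_lt x hx),
    fun h => absurd (((mem_filter_univ x).1 hx).symm.trans
      ((mem_filter_univ x).1 (mem_of_mem_erase h))) (by decide)⟩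
  have hfirst : ∀ r ∈ (Iio ℓ \ O.erase ℓ) \ U, ∃ x ∈ U, x < r := by
    intro r hr
    simp only [mem_sdiff, mem_Iio, mem_erase, mem_filter_univ, not_and, O, U] at hr
    obtain ⟨x, hxr, hx⟩ := hzero_star r ((Fin.eq_zero_iff_ne_one_and_ne_two _).2
      ⟨hr.1.2 hr.1.1.ne, hr.2⟩)
    exact ⟨x, (mem_filter_univ x).2 hx, hxr⟩
  refine ⟨⟨ℓ, O.erase ℓ, U⟩, mem_configurations.2 ⟨hℓ, ⟨hT, ?_⟩, ⟨hU, hstars⟩, hfirst⟩, ?_⟩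
  · rw [card_erase_of_mem hℓO, hones]
  · rw [Configuration.toSeq, insert_erase hℓO]
    exact ofOnesStars_filter S

theorem card_configurations (hn : n = a + b + m) (hb : 1 ≤ b) (hm : 1 ≤ m) :
    #(configurations n a b m) = ∑ ℓ ∈ ({ℓ | n - 1 - a ≤ (ℓ : ℕ)} : Finset (Fin n)),
      (ℓ : ℕ).choose (b - 1) * ((ℓ : ℕ) - b).choose (m - 1) := by
  rw [configurations, card_sigma]
  refine sum_congr rfl fun ℓ hℓ => ?_
  have hℓa := (mem_filter_univ ℓ).1 hℓ
  rw [card_sigma, sum_congr rfl (g := fun _ => ((ℓ : ℕ) - b).choose (m - 1)), sum_const,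
    card_powersetCard, Fin.card_Iio, smul_eq_mul]
  intro T hT
  obtain ⟨hTℓ, hTcard⟩ := mem_powersetCard.1 hT
  have hcard : #(Iio ℓ \ T) = (ℓ : ℕ) - (b - 1) := by
    rw [card_sdiff_of_subset hTℓ, Fin.card_Iio, hTcard]
  obtain ⟨k, rfl⟩ : ∃ k, m = k + 1 := ⟨m - 1, by omega⟩
  have hne : (Iio ℓ \ T).Nonempty := card_pos.1 (by omega)
  rw [card_filter_powersetCard_forall_exists_lt hne k, hcard]
  congr 1
  omega

theorem card_admissible (hn : n = a + b + m) (hb : 1 ≤ b) (hm : 1 ≤ m) :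
    #(admissible n a b m) =
      ∑ c ∈ range (a + 1), (n - 1 - c).choose (b - 1) * (m - 1 + a - c).choose (m - 1) := by
  rw [← card_nbij Configuration.toSeq (fun x => Configuration.toSeq_mem_admissible hn hb hm)
    Configuration.toSeq_injOn fun S => exists_mem_configurations_toSeq_eq hb,
    card_configurations hn hb hm]
  refine (Fin.sum_filter_sub_le_eq_sum_range (by omega)
    fun ℓ => ℓ.choose (b - 1) * (ℓ - b).choose (m - 1)).trans (sum_congr rfl fun c _ => ?_)
  congr 2
  omega

end Admissible

/-- Sequences over {0,1,*} are encoded as functions `Fin n → Fin 3`,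
with `0` = zero, `1` = one, `2` = star. -/
theorem stmt4 (n a b : ℕ) (hb : 1 ≤ b) (hm : 1 ≤ n - a - b) :
    ((Finset.univ : Finset (Fin n → Fin 3)).filter (fun S =>
        (Finset.univ.filter fun i => S i = 0).card = a ∧
        (Finset.univ.filter fun i => S i = 1).card = b ∧
        (Finset.univ.filter fun i => S i = 2).card = n - a - b ∧
        (∃ q, S q = 1 ∧ ∀ r, q ≤ r → S r ≠ 2) ∧
        (∀ p, S p = 0 → ∃ r, r < p ∧ S r = 2))).card
      = ∑ c ∈ Finset.range (a + 1),
          (n - 1 - c).choose (b - 1) * (n - a - b - 1 + a - c).choose (n - a - b - 1) :=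
  card_admissible (by omega) hb hm
end

section
/- Let S ∈ {0,1}^n be a sequence with exactly k ones and n−k zeros (1 ≤ k ≤ n−1), with S ≠ 1^k 0^{n−k}. Let S' be obtained from S by replacing the leftmost 0 and the rightmost 1 with stars. Then S' has exactly two stars, exactly k−1 ones and n−k−1 zeros, no 1 to the right of its rightmost star, and no 0 to the left of its leftmost star; moreover replacing the leftmost star of S' with a 0 and the other star with a 1 recovers S. Conversely, starting from any sequence T of length n over {0,1,*} with exactly two stars, k−1 ones, n−k−1 zeros, no 1 right of the rightmost star and no 0 left of the leftmost star, replacing the leftmost star with 0 and the rightmost star with 1 yields a 0/1 sequence with k ones different from 1^k 0^{n−k}, and the two operations are mutually inverse. -/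
/-!
Each rule changes the sequence at two positions and writes back exactly the letters the other rule
erased, so the two are mutually inverse, and the letter counts follow by tracking one update at a
time. For rule (9) the point is that the leftmost `0` comes before the rightmost `1`: otherwise
every `1` precedes every `0`, and a `0/1` sequence with `k` ones in which all ones precede all
zeros is `1^k 0^{n-k}`. For rule (10), a letter occurring exactly twice occurs only at its leftmost
and rightmost positions, so filling the two stars leaves a `0/1` sequence; it has a `0` before a
`1`, so it is not `1^k 0^{n-k}`.
-/

open Finset Function

section Update

variable {ι β : Type*} [DecidableEq ι]

theorem update_update_update_update_eq_self (f : ι → β) {p q : ι} (hpq : p ≠ q) (a b : β) :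
    update (update (update (update f p a) q b) p (f p)) q (f q) = f := by
  rw [update_comm hpq.symm, update_idem, update_idem, update_eq_self, update_eq_self]

theorem ne_and_eq_of_update_apply_eq {f : ι → β} {p r : ι} {a c : β}
    (h : update f p a r = c) (hac : a ≠ c) : r ≠ p ∧ f r = c := by
  by_cases hr : r = p
  · subst hr
    exact absurd (by simpa using h) hac
  · exact ⟨hr, by simpa [hr] using h⟩

variable [Fintype ι] [DecidableEq β]

theorem filter_update_eq_insert (f : ι → β) (p : ι) (c : β) :
    (univ.filter fun i => update f p c i = c) = insert p (univ.filter fun i => f i = c) := by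
  ext i
  by_cases h : i = p <;> simp [h]

theorem filter_update_eq_erase (f : ι → β) (p : ι) {a c : β} (hac : a ≠ c) :
    (univ.filter fun i => update f p a i = c) = (univ.filter fun i => f i = c).erase p := by
  ext i
  by_cases h : i = p <;> simp [h, hac]

theorem card_filter_update_self_of_ne {f : ι → β} {p : ι} {c : β} (h : f p ≠ c) :
    #(univ.filter fun i => update f p c i = c) = #(univ.filter fun i => f i = c) + 1 := by
  rw [filter_update_eq_insert, card_insert_of_notMem (by simpa using h)]

theorem card_filter_update_of_eq {f : ι → β} {p : ι} {a c : β} (h : f p = c) (hac : a ≠ c) :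
    #(univ.filter fun i => update f p a i = c) = #(univ.filter fun i => f i = c) - 1 := by
  rw [filter_update_eq_erase f p hac, card_erase_of_mem (by simpa using h)]

theorem card_filter_update_of_ne {f : ι → β} {p : ι} {a c : β} (h : f p ≠ c)
    (hac : a ≠ c) :
    #(univ.filter fun i => update f p a i = c) = #(univ.filter fun i => f i = c) := by
  rw [filter_update_eq_erase f p hac, erase_eq_of_notMem (by simpa using h)]

end Update

section TwoValued

variable {ι β : Type*} [Fintype ι] [DecidableEq β] {a b : β}

theorem card_filter_eq_of_forall_eq_or_eq (hab : a ≠ b) {S : ι → β}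
    (hS : ∀ i, S i = a ∨ S i = b) :
    #(univ.filter fun i => S i = a) = Fintype.card ι - #(univ.filter fun i => S i = b) := by
  have hsplit := card_filter_add_card_filter_not (s := univ) (p := fun i => S i = b)
  have hneg : (univ.filter fun i => ¬S i = b) = (univ.filter fun i => S i = a) :=
    filter_congr fun i _ => by rcases hS i with h | h <;> simp [h, hab, hab.symm]
  rw [hneg, card_univ] at hsplit
  omega

theorem eq_ite_lt_of_forall_lt {n k : ℕ} {S : Fin n → β} (hS : ∀ i, S i = a ∨ S i = b)
    (hk : #(univ.filter fun i => S i = b) = k) (hlt : ∀ i j, S i = b → S j = a → i < j) :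
    S = fun i : Fin n => if (i : ℕ) < k then b else a := by
  have hb_iff : ∀ i, S i = b ↔ (i : ℕ) < k := by
    intro i
    constructor
    · intro hi
      have hsub : Iic i ⊆ univ.filter fun j => S j = b := fun j hj => by
        rcases hS j with hj' | hj'
        · exact absurd (hlt i j hi hj') (not_lt.2 (mem_Iic.1 hj))
        · simpa using hj'
      have := card_le_card hsub
      rw [Fin.card_Iic, hk] at this
      omega
    · intro hi
      rcases hS i with hi' | hi'
      · have hsub : (univ.filter fun j => S j = b) ⊆ Iio i := fun j hj =>
          mem_Iio.2 (hlt j i (by simpa using hj) hi')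
        have := card_le_card hsub
        rw [Fin.card_Iio, hk] at this
        omega
      · exact hi'
  funext i
  by_cases h : (i : ℕ) < k
  · simp [h, (hb_iff i).2 h]
  · simp only [h, if_false]
    exact (hS i).resolve_right (mt (hb_iff i).1 h)

theorem lt_of_ne_ite_lt (hab : a ≠ b) {n k : ℕ} {S : Fin n → β}
    (hS : ∀ i, S i = a ∨ S i = b)
    (hk : #(univ.filter fun i => S i = b) = k)
    (hne : S ≠ fun i : Fin n => if (i : ℕ) < k then b else a)
    {p q : Fin n} (hp : S p = a) (hpmin : ∀ r, r < p → S r ≠ a)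
    (hq : S q = b) (hqmax : ∀ r, q < r → S r ≠ b) : p < q := by
  have hqp : q ≠ p := fun h => hab (hp.symm.trans (h ▸ hq))
  by_contra! hpq
  refine hne (eq_ite_lt_of_forall_lt hS hk fun i j hi hj => ?_)
  calc i ≤ q := not_lt.1 fun h => hqmax i h hi
    _ < p := hpq.lt_of_ne hqp
    _ ≤ j := not_lt.1 fun h => hpmin j h hj

end TwoValued

section Extremal

variable {ι β : Type*} [Fintype ι] [LinearOrder ι] [DecidableEq β]

theorem lt_and_forall_eq_or_eq_of_card_filter_eq_two {f : ι → β} {c : β} {p q : ι}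
    (hcard : #(univ.filter fun i => f i = c) = 2)
    (hp : f p = c) (hpmin : ∀ r, r < p → f r ≠ c)
    (hq : f q = c) (hqmax : ∀ r, q < r → f r ≠ c) :
    p < q ∧ ∀ r, f r = c → r = p ∨ r = q := by
  have hle : ∀ r, f r = c → p ≤ r ∧ r ≤ q := fun r hr =>
    ⟨not_lt.1 fun h => hpmin r h hr, not_lt.1 fun h => hqmax r h hr⟩
  have hpq : p < q := by
    refine (hle q hq).1.lt_of_ne fun hpq => ?_
    have hsub : (univ.filter fun i => f i = c) ⊆ {p} := fun r hr => by
      have := hle r (by simpa using hr)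
      exact mem_singleton.2 (le_antisymm (hpq ▸ this.2) this.1)
    simpa [hcard] using card_le_card hsub
  have hpair : ({p, q} : Finset ι) = (univ.filter fun i => f i = c) :=
    eq_of_subset_of_card_le (by simp [insert_subset_iff, hp, hq]) (by rw [hcard, card_pair hpq.ne])
  refine ⟨hpq, fun r hr => ?_⟩
  have : r ∈ ({p, q} : Finset ι) := hpair ▸ by simpa using hr
  simpa using this

end Extremal

theorem stmt9_general (n k : ℕ) (hk1 : 1 ≤ k) :
    -- Rule (9): S is a 0/1-sequence with k ones, S ≠ 1^k 0^{n-k},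
    -- p its leftmost 0, q its rightmost 1; replace both by stars.
    (∀ (S : Fin n → Fin 3) (p q : Fin n),
      (∀ i, S i = 0 ∨ S i = 1) →
      (Finset.univ.filter fun i => S i = 1).card = k →
      S ≠ ((fun i => if (i : ℕ) < k then 1 else 0) : Fin n → Fin 3) →
      S p = 0 → (∀ r, r < p → S r ≠ 0) →
      S q = 1 → (∀ r, q < r → S r ≠ 1) →
      ((Finset.univ.filter fun i =>
          Function.update (Function.update S p 2) q 2 i = 2).card = 2 ∧
       (Finset.univ.filter fun i =>
          Function.update (Function.update S p 2) q 2 i = 1).card = k - 1 ∧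
       (Finset.univ.filter fun i =>
          Function.update (Function.update S p 2) q 2 i = 0).card = n - k - 1 ∧
       (∀ r, Function.update (Function.update S p 2) q 2 r = 1 →
          ∃ t, r < t ∧ Function.update (Function.update S p 2) q 2 t = 2) ∧
       (∀ r, Function.update (Function.update S p 2) q 2 r = 0 →
          ∃ t, t < r ∧ Function.update (Function.update S p 2) q 2 t = 2) ∧
       p < q ∧
       Function.update (Function.update
         (Function.update (Function.update S p 2) q 2) p 0) q 1 = S)) ∧
    -- Rule (10): T has exactly two stars, k-1 ones, n-k-1 zeros, no 1 right
    -- of the rightmost star, no 0 left of the leftmost star; p is its leftmost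
    -- star and q its rightmost star; replace them by 0 and 1 respectively.
    (∀ (T : Fin n → Fin 3) (p q : Fin n),
      (Finset.univ.filter fun i => T i = 2).card = 2 →
      (Finset.univ.filter fun i => T i = 1).card = k - 1 →
      (Finset.univ.filter fun i => T i = 0).card = n - k - 1 →
      (∀ r, T r = 1 → ∃ t, r < t ∧ T t = 2) →
      (∀ r, T r = 0 → ∃ t, t < r ∧ T t = 2) →
      T p = 2 → (∀ r, r < p → T r ≠ 2) →
      T q = 2 → (∀ r, q < r → T r ≠ 2) →
      ((∀ i, Function.update (Function.update T p 0) q 1 i = 0 ∨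
             Function.update (Function.update T p 0) q 1 i = 1) ∧
       (Finset.univ.filter fun i =>
          Function.update (Function.update T p 0) q 1 i = 1).card = k ∧
       Function.update (Function.update T p 0) q 1 ≠
         ((fun i => if (i : ℕ) < k then 1 else 0) : Fin n → Fin 3) ∧
       Function.update (Function.update
         (Function.update (Function.update T p 0) q 1) p 2) q 2 = T)) := by
  refine ⟨fun S p q hS hk hne hp hpmin hq hqmax => ?_,
    fun T p q h2 h1 _ _ _ hp hpmin hq hqmax => ?_⟩
  · have hpq : p < q := lt_of_ne_ite_lt (by decide) hS hk hne hp hpmin hq hqmax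
    have hS2 : (univ.filter fun i => S i = 2) = ∅ :=
      filter_eq_empty_iff.2 fun i _ => by rcases hS i with h | h <;> simp [h]
    refine ⟨?_, ?_, ?_, fun r hr => ?_, fun r hr => ?_, hpq,
      hp ▸ hq ▸ update_update_update_update_eq_self S hpq.ne 2 2⟩
    · rw [card_filter_update_self_of_ne (by simp [hpq.ne', hq]),
        card_filter_update_self_of_ne (by simp [hp]), hS2, card_empty]
    · rw [card_filter_update_of_eq (by simp [hpq.ne', hq]) (by decide),
        card_filter_update_of_ne (by simp [hp]) (by decide), hk]
    · rw [card_filter_update_of_ne (by simp [hpq.ne', hq]) (by decide),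
        card_filter_update_of_eq (by simp [hp]) (by decide),
        card_filter_eq_of_forall_eq_or_eq (by decide) hS, hk, Fintype.card_fin]
    · obtain ⟨hrq, hr⟩ := ne_and_eq_of_update_apply_eq hr (by decide)
      obtain ⟨-, hr⟩ := ne_and_eq_of_update_apply_eq hr (by decide)
      exact ⟨q, (not_lt.1 fun h => hqmax r h hr).lt_of_ne hrq, by simp⟩
    · obtain ⟨-, hr⟩ := ne_and_eq_of_update_apply_eq hr (by decide)
      obtain ⟨hrp, hr⟩ := ne_and_eq_of_update_apply_eq hr (by decide)
      exact ⟨p, (not_lt.1 fun h => hpmin r h hr).lt_of_ne' hrp, by simp [hpq.ne]⟩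
  · obtain ⟨hpq, hstars⟩ := lt_and_forall_eq_or_eq_of_card_filter_eq_two h2 hp hpmin hq hqmax
    refine ⟨fun i => ?_, ?_, fun h => ?_, ?_⟩
    · by_cases hiq : i = q
      · simp [hiq]
      by_cases hip : i = p
      · simp [hip, hpq.ne]
      have hi : T i ≠ 2 := fun h => (hstars i h).elim hip hiq
      simp only [update_of_ne hiq, update_of_ne hip]
      omega
    · rw [card_filter_update_self_of_ne (by simp [hpq.ne', hq]),
        card_filter_update_of_ne (by simp [hp]) (by decide), h1]
      omega
    · have hp0 := congrFun h p
      have hq1 := congrFun h q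
      simp [hpq.ne] at hp0 hq1
      omega
    · simpa only [hp, hq] using update_update_update_update_eq_self T hpq.ne 0 1

/-- Sequences over {0,1,*} are encoded as functions `Fin n → Fin 3`,
with `0` = zero, `1` = one, `2` = star.  The distinguished vertex
`v₀ = 1^k 0^{n-k}` is `fun i => if (i : ℕ) < k then 1 else 0`.
Rules (9) and (10) of the matching are mutually inverse. -/
theorem stmt9 (n k : ℕ) (hk1 : 1 ≤ k) (hk2 : k ≤ n - 1) :
    -- Rule (9): S is a 0/1-sequence with k ones, S ≠ 1^k 0^{n-k},
    -- p its leftmost 0, q its rightmost 1; replace both by stars.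
    (∀ (S : Fin n → Fin 3) (p q : Fin n),
      (∀ i, S i = 0 ∨ S i = 1) →
      (Finset.univ.filter fun i => S i = 1).card = k →
      S ≠ ((fun i => if (i : ℕ) < k then 1 else 0) : Fin n → Fin 3) →
      S p = 0 → (∀ r, r < p → S r ≠ 0) →
      S q = 1 → (∀ r, q < r → S r ≠ 1) →
      ((Finset.univ.filter fun i =>
          Function.update (Function.update S p 2) q 2 i = 2).card = 2 ∧
       (Finset.univ.filter fun i =>
          Function.update (Function.update S p 2) q 2 i = 1).card = k - 1 ∧
       (Finset.univ.filter fun i =>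
          Function.update (Function.update S p 2) q 2 i = 0).card = n - k - 1 ∧
       (∀ r, Function.update (Function.update S p 2) q 2 r = 1 →
          ∃ t, r < t ∧ Function.update (Function.update S p 2) q 2 t = 2) ∧
       (∀ r, Function.update (Function.update S p 2) q 2 r = 0 →
          ∃ t, t < r ∧ Function.update (Function.update S p 2) q 2 t = 2) ∧
       p < q ∧
       Function.update (Function.update
         (Function.update (Function.update S p 2) q 2) p 0) q 1 = S)) ∧
    -- Rule (10): T has exactly two stars, k-1 ones, n-k-1 zeros, no 1 right
    -- of the rightmost star, no 0 left of the leftmost star; p is its leftmost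
    -- star and q its rightmost star; replace them by 0 and 1 respectively.
    (∀ (T : Fin n → Fin 3) (p q : Fin n),
      (Finset.univ.filter fun i => T i = 2).card = 2 →
      (Finset.univ.filter fun i => T i = 1).card = k - 1 →
      (Finset.univ.filter fun i => T i = 0).card = n - k - 1 →
      (∀ r, T r = 1 → ∃ t, r < t ∧ T t = 2) →
      (∀ r, T r = 0 → ∃ t, t < r ∧ T t = 2) →
      T p = 2 → (∀ r, r < p → T r ≠ 2) →
      T q = 2 → (∀ r, q < r → T r ≠ 2) →
      ((∀ i, Function.update (Function.update T p 0) q 1 i = 0 ∨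
             Function.update (Function.update T p 0) q 1 i = 1) ∧
       (Finset.univ.filter fun i =>
          Function.update (Function.update T p 0) q 1 i = 1).card = k ∧
       Function.update (Function.update T p 0) q 1 ≠
         ((fun i => if (i : ℕ) < k then 1 else 0) : Fin n → Fin 3) ∧
       Function.update (Function.update
         (Function.update (Function.update T p 0) q 1) p 2) q 2 = T)) :=
  stmt9_general n k hk1
end
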